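/- Let M̄ be a smooth projective surface and D a reduced normal crossing divisor on M̄. If there exists α₀ ∈ (0,1) such that the ℝ-divisor L_α = K_{M̄} + αD is big and nef for all α ∈ (α₀, 1), then the pair (M̄, D) is D-minimal and of log-general type, and D is a semi-stable curve. -/

import Mathlib

open scoped BigOperators

/-- Abstract interface for a smooth complex projective surface `M̄`:
`C` is the group of ℝ-divisor classes, `inter` the intersection form,
`K` the canonical class, and `Curve` the collection of irreducible curves on `M̄`. -/
structure ProjSurface where
  /-- the group of ℝ-divisor classes on `M̄` -/
  C : Type
  [instAddC : AddCommGroup C]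
  [instModC : Module ℝ C]
  /-- the intersection form on ℝ-divisor classes -/
  inter : C → C → ℝ
  inter_symm : ∀ a b, inter a b = inter b a
  inter_add_left : ∀ a b c, inter (a + b) c = inter a c + inter b c
  inter_smul_left : ∀ (r : ℝ) (a b : C), inter (r • a) b = r * inter a b
  /-- the canonical class `K_{M̄}` -/
  K : C
  /-- the irreducible curves on `M̄` -/
  Curve : Type
  /-- the ℝ-divisor class of an irreducible curve -/
  cls : Curve → C
  /-- `E` is a smooth rational curve, i.e. `E ≅ ℂP¹` -/
  IsSmoothRational : Curve → Prop
  /-- `E` is a smooth curve -/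
  IsSmooth : Curve → Prop
  /-- the arithmetic genus of an irreducible curve -/
  pa : Curve → ℤ
  /-- adjunction: `(K + E)·E = 2 pₐ(E) − 2` -/
  adjunction : ∀ E, inter (K + cls E) (cls E) = 2 * (pa E : ℝ) - 2
  /-- a smooth rational curve has arithmetic genus `0` -/
  pa_rational : ∀ E, IsSmoothRational E → pa E = 0
  /-- a (finite) collection of irreducible curves forms a normal crossing configuration -/
  NormalCrossings : Set Curve → Prop
  /-- the complete linear system of (an integral divisor in) the class `a`
  is base-point free -/
  Bpf : C → Prop

attribute [instance] ProjSurface.instAddC ProjSurface.instModC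

namespace ProjSurface

variable (S : ProjSurface)

/-- An ℝ-divisor class is nef if it meets every irreducible curve nonnegatively. -/
def Nef (a : S.C) : Prop := ∀ E : S.Curve, 0 ≤ S.inter a (S.cls E)

/-- Ampleness for ℝ-divisor classes on a projective surface, via the
Nakai–Moishezon/Campana–Peternell criterion: positive self-intersection and
positive intersection with every irreducible curve. -/
def Ample (a : S.C) : Prop :=
  0 < S.inter a a ∧ ∀ E : S.Curve, 0 < S.inter a (S.cls E)

/-- Effective ℝ-divisor classes: nonnegative real combinations of irreducible curves. -/
def Effective (a : S.C) : Prop :=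
  ∃ (n : ℕ) (r : Fin n → ℝ) (E : Fin n → S.Curve),
    (∀ i, 0 ≤ r i) ∧ a = ∑ i, r i • S.cls (E i)

/-- Big ℝ-divisor classes: sum of an ample and an effective class. -/
def Big (a : S.C) : Prop := ∃ b e, S.Ample b ∧ S.Effective e ∧ a = b + e

/-- a `(−2)`-curve: a smooth rational curve with self-intersection `−2` -/
def IsMinusTwo (E : S.Curve) : Prop :=
  S.IsSmoothRational E ∧ S.inter (S.cls E) (S.cls E) = -2

end ProjSurface

/-- A logarithmic pair `(M̄, D)`: a reduced divisor `D` with normal crossings on `M̄`,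
given by its finitely many pairwise distinct irreducible components. -/
structure LogPair (S : ProjSurface) where
  /-- index set of the irreducible components of `D` -/
  ι : Type
  [instFin : Fintype ι]
  /-- the irreducible components `D_i` of `D` -/
  comp : ι → S.Curve
  comp_inj : Function.Injective comp
  normal_crossings : S.NormalCrossings (Set.range comp)

attribute [instance] LogPair.instFin

namespace LogPair

variable {S : ProjSurface} (P : LogPair S)

/-- the class of the divisor `D = Σ Dᵢ` -/
def D : S.C := ∑ i, S.cls (P.comp i)

/-- the log-canonical class `L = K_{M̄} + D` -/
def L : S.C := S.K + P.D

/-- the twisted log-canonical class `L_α = K_{M̄} + αD` -/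
def Lα (α : ℝ) : S.C := S.K + α • P.D

/-- `E` is an irreducible component of `D` -/
def IsComponent (E : S.Curve) : Prop := ∃ i, P.comp i = E

/-- `(M̄, D)` is `D`-minimal: there is no curve `E ≅ ℂP¹` on `M̄` with
`E² = −1` and `E·D ≤ 1`. -/
def DMinimal : Prop :=
  ¬ ∃ E : S.Curve, S.IsSmoothRational E ∧ S.inter (S.cls E) (S.cls E) = -1 ∧
      S.inter (S.cls E) P.D ≤ 1

/-- `D` is semi-stable: every smooth rational component of `D` meets the other
components of `D` in at least two points (i.e. `E·(D−E) ≥ 2`). -/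
def SemiStable : Prop :=
  ∀ i, S.IsSmoothRational (P.comp i) →
    2 ≤ S.inter (S.cls (P.comp i)) (P.D - S.cls (P.comp i))

/-- `(M̄, D)` is of log-general type: `L = K + D` is big. -/
def LogGeneralType : Prop := S.Big P.L

end LogPair

/-!
For a smooth rational curve `E`, adjunction gives `K·E = -2 - E²`, hence
`L_α·E = -2 - E² + α D·E`. A `(-1)`-curve with `E·D ≤ 1` therefore has `L_α·E < 0` for every
`α < 1`, contradicting nefness. Since `α ↦ L_α·E` is affine, nefness of `L_α` for `α` close to `1`
passes to the limit `L = L_1`, and for a smooth rational component `E` of `D` the same formula reads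
`L·E = E·(D - E) - 2`, which is semi-stability. Finally `L = L_α + (1 - α) D` is big as the sum of
a big and an effective class.
-/

open Filter Topology Set

namespace ProjSurface

variable {S : ProjSurface}

lemma inter_neg_left (a b : S.C) : S.inter (-a) b = -S.inter a b := by
  rw [← neg_one_smul ℝ a, S.inter_smul_left, neg_one_mul]

lemma inter_sub_right (a b c : S.C) : S.inter a (b - c) = S.inter a b - S.inter a c := by
  rw [S.inter_symm, sub_eq_add_neg, S.inter_add_left, inter_neg_left, S.inter_symm b,
    S.inter_symm c, sub_eq_add_neg]

lemma inter_K_cls_of_isSmoothRational {E : S.Curve} (hE : S.IsSmoothRational E) :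
    S.inter S.K (S.cls E) = -2 - S.inter (S.cls E) (S.cls E) := by
  have h := S.adjunction E
  rw [S.inter_add_left, S.pa_rational E hE, Int.cast_zero] at h
  linarith

lemma effective_sum {ι : Type} [Fintype ι] (r : ι → ℝ) (E : ι → S.Curve) (hr : ∀ i, 0 ≤ r i) :
    S.Effective (∑ i, r i • S.cls (E i)) := by
  let e := Fintype.equivFin ι
  exact ⟨Fintype.card ι, r ∘ e.symm, E ∘ e.symm, fun _ => hr _,
    (e.symm.sum_comp fun i => r i • S.cls (E i)).symm⟩

lemma Effective.add {a b : S.C} (ha : S.Effective a) (hb : S.Effective b) :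
    S.Effective (a + b) := by
  obtain ⟨n, r, E, hr, rfl⟩ := ha
  obtain ⟨m, s, F, hs, rfl⟩ := hb
  refine ⟨n + m, Fin.append r s, Fin.append E F,
    Fin.addCases (fun j => by simpa only [Fin.append_left] using hr j)
      (fun j => by simpa only [Fin.append_right] using hs j), ?_⟩
  simp only [Fin.sum_univ_add, Fin.append_left, Fin.append_right]

lemma Big.add_effective {a e : S.C} (ha : S.Big a) (he : S.Effective e) : S.Big (a + e) := by
  obtain ⟨b, e', hb, he', rfl⟩ := ha
  exact ⟨b, e' + e, hb, he'.add he, add_assoc b e' e⟩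

end ProjSurface

namespace LogPair

variable {S : ProjSurface} (P : LogPair S)

lemma inter_Lα (α : ℝ) (c : S.C) :
    S.inter (P.Lα α) c = S.inter S.K c + α * S.inter P.D c := by
  rw [Lα, S.inter_add_left, S.inter_smul_left]

lemma inter_Lα_cls_of_isSmoothRational {E : S.Curve} (hE : S.IsSmoothRational E) (α : ℝ) :
    S.inter (P.Lα α) (S.cls E) =
      -2 - S.inter (S.cls E) (S.cls E) + α * S.inter (S.cls E) P.D := by
  rw [inter_Lα, S.inter_K_cls_of_isSmoothRational hE, S.inter_symm P.D]

lemma inter_L_cls_of_isSmoothRational {E : S.Curve} (hE : S.IsSmoothRational E) :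
    S.inter P.L (S.cls E) = S.inter (S.cls E) (P.D - S.cls E) - 2 := by
  have h := P.inter_Lα_cls_of_isSmoothRational hE 1
  rw [Lα, one_smul] at h
  rw [L, h, ProjSurface.inter_sub_right]
  ring

lemma effective_smul_D {r : ℝ} (hr : 0 ≤ r) : S.Effective (r • P.D) := by
  rw [D, Finset.smul_sum]
  exact ProjSurface.effective_sum (fun _ => r) P.comp fun _ => hr

lemma L_eq_Lα_add_smul_D (α : ℝ) : P.L = P.Lα α + (1 - α) • P.D := by
  rw [L, Lα, add_assoc, ← add_smul, add_sub_cancel, one_smul]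

lemma dMinimal_of_nef_Lα {α : ℝ} (hα₀ : 0 ≤ α) (hα₁ : α < 1) (h : S.Nef (P.Lα α)) :
    P.DMinimal := by
  rintro ⟨E, hE, hE2, hED⟩
  have hnef := h E
  rw [P.inter_Lα_cls_of_isSmoothRational hE, hE2] at hnef
  nlinarith

lemma logGeneralType_of_big_Lα {α : ℝ} (hα : α ≤ 1) (h : S.Big (P.Lα α)) :
    P.LogGeneralType := by
  rw [LogGeneralType, P.L_eq_Lα_add_smul_D α]
  exact h.add_effective (P.effective_smul_D (sub_nonneg.mpr hα))

lemma nef_L_of_nef_Lα_near_one {α₀ : ℝ} (hα₀ : α₀ < 1)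
    (h : ∀ α ∈ Ioo α₀ 1, S.Nef (P.Lα α)) : S.Nef P.L := by
  intro E
  have hlim : Tendsto (fun α => S.inter (P.Lα α) (S.cls E)) (𝓝[<] 1)
      (𝓝 (S.inter P.L (S.cls E))) := by
    have hcont : Continuous fun α : ℝ => S.inter S.K (S.cls E) + α * S.inter P.D (S.cls E) := by
      fun_prop
    simpa only [inter_Lα, L, S.inter_add_left, one_mul] using
      (hcont.tendsto 1).mono_left nhdsWithin_le_nhds
  exact ge_of_tendsto hlim (Filter.mem_of_superset (Ioo_mem_nhdsLT hα₀) fun α hα => h α hα E)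

lemma semiStable_of_nef_L (h : S.Nef P.L) : P.SemiStable := by
  intro i hE
  have hnef := h (P.comp i)
  rw [P.inter_L_cls_of_isSmoothRational hE] at hnef
  linarith

end LogPair

/-- If there exists `α₀ ∈ (0,1)` such that the ℝ-divisor
`L_α = K + αD` is big and nef for all `α ∈ (α₀, 1)`, then `(M̄, D)` is
`D`-minimal of log-general type and `D` is a semi-stable curve. -/
theorem bigNef_near_one_implies_minimal_logGeneral_semiStable
    (S : ProjSurface) (P : LogPair S)
    (h : ∃ α₀ ∈ Set.Ioo (0 : ℝ) 1, ∀ α ∈ Set.Ioo α₀ 1,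
      S.Big (P.Lα α) ∧ S.Nef (P.Lα α)) :
    P.DMinimal ∧ P.LogGeneralType ∧ P.SemiStable := by
  obtain ⟨α₀, ⟨hα₀, hα₀_lt⟩, hbigNef⟩ := h
  obtain ⟨β, hβ⟩ := exists_between hα₀_lt
  obtain ⟨hbig, hnef⟩ := hbigNef β hβ
  exact ⟨P.dMinimal_of_nef_Lα (hα₀.trans hβ.1).le hβ.2 hnef,
    P.logGeneralType_of_big_Lα hβ.2.le hbig,
    P.semiStable_of_nef_L (P.nef_L_of_nef_Lα_near_one hα₀_lt fun α hα => (hbigNef α hα).2)⟩
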